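/- arXiv:1809.10220 — 5 statements merged into one kernel-verified Lean document; each statement's English description precedes it below -/
import Mathlib

section
/- Let G be a group and let α, β ∈ G. Then for every integer l ≥ 2, one has [α^l, β] = (∏_{j=1}^{l-1} [α, [α^{l-j}, β]]) · [α, β]^l, where the product ∏_{j=1}^{l-1} is taken from left to right in increasing order of j. -/
open scoped commutatorElement

/-!
Writing `α ^ (n + 1) = α * α ^ n`, the expansion `⁅a * b, c⁆ = ⁅a, ⁅b, c⁆⁆ * ⁅b, c⁆ * ⁅a, c⁆`
peels off one factor `⁅α, ⁅α ^ n, β⁆⁆` in front and one factor `⁅α, β⁆` at the back; induction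
on `n` collects these factors into the stated product.
-/

theorem commutatorElement_mul_left_eq {G : Type*} [Group G] (a b c : G) :
    ⁅a * b, c⁆ = ⁅a, ⁅b, c⁆⁆ * ⁅b, c⁆ * ⁅a, c⁆ := by
  simp only [commutatorElement_def]
  group

theorem commutatorElement_pow_succ_left {G : Type*} [Group G] (α β : G) (n : ℕ) :
    ⁅α ^ (n + 1), β⁆ =
      ((List.range n).map fun i => ⁅α, ⁅α ^ (n - i), β⁆⁆).prod * ⁅α, β⁆ ^ (n + 1) := by
  induction n with
  | zero => simp
  | succ n ih =>
    calc ⁅α ^ (n + 2), β⁆ = ⁅α, ⁅α ^ (n + 1), β⁆⁆ * ⁅α ^ (n + 1), β⁆ * ⁅α, β⁆ := by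
          rw [pow_succ' α, commutatorElement_mul_left_eq]
      _ = _ := by
          rw [List.prod_range_succ']
          nth_rw 2 [ih]
          simp only [Nat.succ_sub_succ, Nat.sub_zero, pow_succ _ (n + 1), mul_assoc]

theorem commutator_pow_left_eq_general {G : Type*} [Group G] (α β : G) (l : ℕ) :
    ⁅α ^ l, β⁆ =
      ((List.range (l - 1)).map (fun i => ⁅α, ⁅α ^ (l - (i + 1)), β⁆⁆)).prod * ⁅α, β⁆ ^ l := by
  cases l with
  | zero => simp
  | succ n => simpa using commutatorElement_pow_succ_left α β n

/-- For a group `G`, `α β : G` and `l ≥ 2`,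
`[α^l, β] = (∏_{j=1}^{l-1} [α, [α^{l-j}, β]]) · [α, β]^l`,
where the product is taken from left to right in increasing order of `j`. -/
theorem commutator_pow_left_eq {G : Type*} [Group G] (α β : G) (l : ℕ) (hl : 2 ≤ l) :
    ⁅α ^ l, β⁆ =
      ((List.range (l - 1)).map (fun i => ⁅α, ⁅α ^ (l - (i + 1)), β⁆⁆)).prod * ⁅α, β⁆ ^ l :=
  commutator_pow_left_eq_general α β l
end

section
/- Let G be a group, let k ≥ 1 be an integer, let α ∈ G and let β ∈ C_{k-1}(G). Then for every positive integer l there exists an element h ∈ C_{k+1}(G) such that [α^l, β^l] = [α, β]^{l²} · h. -/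
open scoped commutatorElement

/-
Since `⁅α, β⁆ ∈ C_k(G)`, its commutators with `α` and `β` lie in `C_{k+1}(G)`, so modulo
`C_{k+1}(G)` it commutes with both. For such a pair, `⁅a ^ n, b⁆ = ⁅a, b⁆ ^ n` and
`⁅a, b ^ n⁆ = ⁅a, b⁆ ^ n`, and applying both gives `⁅α ^ l, β ^ l⁆ ≡ ⁅α, β⁆ ^ (l ^ 2)`.
-/

section CommutatorPow

variable {G : Type*} [Group G]

theorem commutatorElement_pow_left_of_commute {a b : G} (h : Commute ⁅a, b⁆ a) (n : ℕ) :
    ⁅a ^ n, b⁆ = ⁅a, b⁆ ^ n := by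
  induction n with
  | zero => simp
  | succ n ih =>
    have expand : ⁅a ^ (n + 1), b⁆ = a * ⁅a ^ n, b⁆ * a⁻¹ * ⁅a, b⁆ := by
      simp only [commutatorElement_def]
      group
    rw [expand, ih, ((h.pow_left n).symm).eq, pow_succ]
    group

theorem commutatorElement_pow_right_of_commute {a b : G} (h : Commute ⁅a, b⁆ b) (n : ℕ) :
    ⁅a, b ^ n⁆ = ⁅a, b⁆ ^ n := by
  induction n with
  | zero => simp
  | succ n ih =>
    have expand : ⁅a, b ^ (n + 1)⁆ = ⁅a, b⁆ * (b * ⁅a, b ^ n⁆ * b⁻¹) := by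
      simp only [commutatorElement_def]
      group
    rw [expand, ih, ((h.pow_left n).symm).eq, pow_succ']
    group

theorem commutatorElement_pow_pow_of_commute {a b : G} (ha : Commute ⁅a, b⁆ a)
    (hb : Commute ⁅a, b⁆ b) (n : ℕ) : ⁅a ^ n, b ^ n⁆ = ⁅a, b⁆ ^ (n ^ 2) := by
  have right : ⁅a, b ^ n⁆ = ⁅a, b⁆ ^ n := commutatorElement_pow_right_of_commute hb n
  have left : Commute ⁅a, b ^ n⁆ a := right ▸ ha.pow_left n
  rw [commutatorElement_pow_left_of_commute left, right, ← pow_mul, sq]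

theorem Subgroup.exists_mem_commutatorElement_pow_pow_eq_mul {N : Subgroup G} [N.Normal]
    {a b : G} (ha : ⁅⁅a, b⁆, a⁆ ∈ N) (hb : ⁅⁅a, b⁆, b⁆ ∈ N) (n : ℕ) :
    ∃ h ∈ N, ⁅a ^ n, b ^ n⁆ = ⁅a, b⁆ ^ (n ^ 2) * h := by
  have commute_mod {x : G} (hx : ⁅⁅a, b⁆, x⁆ ∈ N) :
      Commute ⁅(a : G ⧸ N), (b : G ⧸ N)⁆ (x : G ⧸ N) := by
    rw [← commutatorElement_eq_one_iff_commute]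
    exact (QuotientGroup.eq_one_iff _).mpr hx
  have mod_N : ((⁅a, b⁆ ^ (n ^ 2) : G) : G ⧸ N) = ((⁅a ^ n, b ^ n⁆ : G) : G ⧸ N) := by
    simp only [QuotientGroup.mk_pow]
    exact (commutatorElement_pow_pow_of_commute (commute_mod ha) (commute_mod hb) n).symm
  exact ⟨_, QuotientGroup.eq.mp mod_N, by group⟩

theorem commutatorElement_mem_top_lowerCentralSeries {a b : G} {k : ℕ}
    (hb : b ∈ (⊤ : Subgroup G).lowerCentralSeries (k - 1)) :
    ⁅a, b⁆ ∈ (⊤ : Subgroup G).lowerCentralSeries k := by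
  cases k with
  | zero => exact Subgroup.mem_top _
  | succ k =>
    rw [← commutatorElement_inv, Subgroup.lowerCentralSeries_succ]
    exact inv_mem (Subgroup.commutator_mem_commutator hb (Subgroup.mem_top a))

end CommutatorPow

theorem commutator_pow_mem_lowerCentralSeries_general {G : Type*} [Group G] (k : ℕ)
    (α β : G) (hβ : β ∈ (⊤ : Subgroup G).lowerCentralSeries (k - 1)) (l : ℕ) :
    ∃ h ∈ (⊤ : Subgroup G).lowerCentralSeries (k + 1), ⁅α ^ l, β ^ l⁆ = ⁅α, β⁆ ^ (l ^ 2) * h := by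
  have hαβ := commutatorElement_mem_top_lowerCentralSeries (a := α) hβ
  have mem_succ (g : G) : ⁅⁅α, β⁆, g⁆ ∈ (⊤ : Subgroup G).lowerCentralSeries (k + 1) :=
    Subgroup.commutator_mem_commutator hαβ (Subgroup.mem_top g)
  exact Subgroup.exists_mem_commutatorElement_pow_pow_eq_mul (mem_succ α) (mem_succ β) l

/-- Let `G` be a group, `k ≥ 1`, `α ∈ G` and `β ∈ C_{k-1}(G)` (lower central series, with
`C_0(G) = G` and `C_{k+1}(G) = [C_k(G), G]`).  Then for every positive integer `l` there is
`h ∈ C_{k+1}(G)` with `[α^l, β^l] = [α, β]^(l²) · h`. -/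
theorem commutator_pow_mem_lowerCentralSeries {G : Type*} [Group G] (k : ℕ) (hk : 1 ≤ k)
    (α β : G) (hβ : β ∈ (⊤ : Subgroup G).lowerCentralSeries (k - 1)) (l : ℕ) (hl : 0 < l) :
    ∃ h ∈ (⊤ : Subgroup G).lowerCentralSeries (k + 1), ⁅α ^ l, β ^ l⁆ = ⁅α, β⁆ ^ (l ^ 2) * h :=
  commutator_pow_mem_lowerCentralSeries_general k α β hβ l
end

section
/- Let k be a positive integer, let E be k-dimensional real Euclidean space, and let G be a nilpotent subgroup of the group of bijective isometries of E (under composition). Then two elements f, g ∈ G commute (f ∘ g = g ∘ f) if and only if their linear parts L_f and L_g commute (L_f ∘ L_g = L_g ∘ L_f). -/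
/-!
If the linear parts of `f` and `g` commute, `⁅f, g⁆` is the translation by
`v = f (g 0) - g (f 0)`. The commutator of a translation by `v` with an isometry `h` is the
translation by `v - L_h v`, so in a nilpotent group `(1 - L_h)ⁿ v = 0` for some `n`; since the
range of `1 - L` is orthogonal to the fixed vectors of a linear isometry `L`, this forces
`L_h v = v`. Applied to `h = f, g`, and since `v = (L_f (g 0) - g 0) - (L_g (f 0) - f 0)` lies
in the sum of those ranges, `v` is orthogonal to itself.
-/

open scoped RealInnerProductSpace commutatorElement

theorem Subgroup.exists_iterate_commutatorElement_eq_one {G : Type*} [Group G] {S : Subgroup G}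
    (hS : Group.IsNilpotent S) {x y : G} (hx : x ∈ S) (hy : y ∈ S) :
    ∃ n, (⁅·, y⁆)^[n] x = 1 := by
  obtain ⟨n, hn⟩ := (Subgroup.isNilpotent_iff_lowerCentralSeries S).mp hS
  have hmem : ∀ m, (⁅·, y⁆)^[m] x ∈ S.lowerCentralSeries m := by
    intro m
    induction m with
    | zero => exact hx
    | succ m ih =>
      rw [Function.iterate_succ_apply']
      exact Subgroup.commutator_mem_commutator ih hy
  exact ⟨n, by simpa [hn] using hmem n⟩

namespace LinearIsometry

variable {E : Type*} [NormedAddCommGroup E] [InnerProductSpace ℝ E] (A : E →ₗᵢ[ℝ] E)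

theorem inner_map_sub_self_of_map_eq {v : E} (hv : A v = v) (w : E) : ⟪A w - w, v⟫ = 0 := by
  rw [inner_sub_left, ← A.inner_map_map w v, hv, sub_self]

theorem map_eq_of_map_sub_eq {v : E} (h : A (v - A v) = v - A v) : A v = v := by
  have h0 : ⟪A v - v, v - A v⟫ = 0 := A.inner_map_sub_self_of_map_eq h v
  rw [← neg_sub, inner_neg_left, neg_eq_zero, inner_self_eq_zero, sub_eq_zero] at h0
  exact h0.symm

theorem map_eq_of_iterate_sub_eq_zero {n : ℕ} {v : E} (h : (fun u => u - A u)^[n] v = 0) :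
    A v = v := by
  induction n generalizing v with
  | zero => simp [show v = 0 from h]
  | succ n ih => exact A.map_eq_of_map_sub_eq (ih h)

end LinearIsometry

namespace IsometryEquiv

variable {E : Type*} [NormedAddCommGroup E]

theorem mul_inv_eq_addRight {a b : E ≃ᵢ E} (h : ∀ x, a x - a 0 = b x - b 0) :
    a * b⁻¹ = addRight (a 0 - b 0) := by
  ext x
  have := h (b⁻¹ x)
  rw [apply_inv_self] at this
  show a (b⁻¹ x) = x + (a 0 - b 0)
  linear_combination (norm := module) this

section NormedSpace

variable [NormedSpace ℝ E]

theorem apply_sub (h : E ≃ᵢ E) (x y : E) : h (x - y) = h x - (h y - h 0) := by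
  have := map_sub h.toRealLinearIsometryEquiv x y
  simp only [toRealLinearIsometryEquiv_apply] at this
  linear_combination (norm := module) this

theorem commutatorElement_addRight (h : E ≃ᵢ E) (v : E) :
    ⁅addRight v, h⁆ = addRight (v - h.toRealLinearIsometryEquiv v) := by
  ext x
  show h ((addRight v).symm (h⁻¹ x)) + v = x + (v - h.toRealLinearIsometryEquiv v)
  rw [addRight_symm, addRight_apply, ← sub_eq_add_neg, apply_sub, apply_inv_self,
    toRealLinearIsometryEquiv_apply]
  abel

theorem iterate_commutatorElement_addRight (h : E ≃ᵢ E) (v : E) (n : ℕ) :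
    (⁅·, h⁆)^[n] (addRight v) = addRight ((fun u => u - h.toRealLinearIsometryEquiv u)^[n] v) :=
  ((Function.Semiconj.iterate_right (f := addRight)
    (fun v => (commutatorElement_addRight h v).symm) n) v).symm

theorem comp_sub_apply_zero (f g : E ≃ᵢ E) :
    (fun x => f x - f 0) ∘ (fun x => g x - g 0) = fun x => (f * g) x - (f * g) 0 := by
  funext x
  simp only [Function.comp_apply, mul_apply, apply_sub]
  abel

end NormedSpace

variable [InnerProductSpace ℝ E]

theorem toRealLinearIsometryEquiv_apply_eq_of_addRight_mem {G : Subgroup (E ≃ᵢ E)}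
    (hG : Group.IsNilpotent G) {h : E ≃ᵢ E} (hh : h ∈ G) {v : E} (hv : addRight v ∈ G) :
    h.toRealLinearIsometryEquiv v = v := by
  obtain ⟨n, hn⟩ := Subgroup.exists_iterate_commutatorElement_eq_one hG hv hh
  rw [iterate_commutatorElement_addRight] at hn
  have hn0 : (fun u => u - h.toRealLinearIsometryEquiv u)^[n] v = 0 := by
    simpa using congr($hn 0)
  exact h.toRealLinearIsometryEquiv.toLinearIsometry.map_eq_of_iterate_sub_eq_zero hn0

theorem apply_apply_zero_eq_of_toRealLinearIsometryEquiv_apply_eq {f g : E ≃ᵢ E}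
    (hf : f.toRealLinearIsometryEquiv (f (g 0) - g (f 0)) = f (g 0) - g (f 0))
    (hg : g.toRealLinearIsometryEquiv (f (g 0) - g (f 0)) = f (g 0) - g (f 0)) :
    f (g 0) = g (f 0) := by
  set v := f (g 0) - g (f 0)
  have hv : v = (f.toRealLinearIsometryEquiv (g 0) - g 0) -
      (g.toRealLinearIsometryEquiv (f 0) - f 0) := by
    simp only [v, toRealLinearIsometryEquiv_apply]
    abel
  have hfv : ⟪f.toRealLinearIsometryEquiv (g 0) - g 0, v⟫ = 0 :=
    f.toRealLinearIsometryEquiv.toLinearIsometry.inner_map_sub_self_of_map_eq hf _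
  have hgv : ⟪g.toRealLinearIsometryEquiv (f 0) - f 0, v⟫ = 0 :=
    g.toRealLinearIsometryEquiv.toLinearIsometry.inner_map_sub_self_of_map_eq hg _
  have hvv : ⟪v, v⟫ = 0 := by
    nth_rewrite 1 [hv]
    rw [inner_sub_left, hfv, hgv, sub_zero]
  exact sub_eq_zero.mp (inner_self_eq_zero.mp hvv)

end IsometryEquiv

open IsometryEquiv in
theorem isometry_commute_iff_linear_parts_commute_general (k : ℕ)
    (G : Subgroup (EuclideanSpace ℝ (Fin k) ≃ᵢ EuclideanSpace ℝ (Fin k)))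
    (hG : Group.IsNilpotent G)
    (f g : EuclideanSpace ℝ (Fin k) ≃ᵢ EuclideanSpace ℝ (Fin k)) (hf : f ∈ G) (hg : g ∈ G) :
    f * g = g * f ↔
      (fun x => f x - f 0) ∘ (fun x => g x - g 0) =
        (fun x => g x - g 0) ∘ (fun x => f x - f 0) := by
  rw [comp_sub_apply_zero, comp_sub_apply_zero]
  refine ⟨fun hfg => by rw [hfg], fun hlin => ?_⟩
  have hcomm : ⁅f, g⁆ = addRight (f (g 0) - g (f 0)) := by
    rw [commutatorElement_def, mul_assoc, ← mul_inv_rev]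
    exact mul_inv_eq_addRight (congrFun hlin)
  have hmem : addRight (f (g 0) - g (f 0)) ∈ G :=
    hcomm ▸ G.commutator_le_self (Subgroup.commutator_mem_commutator hf hg)
  have hfix : f (g 0) = g (f 0) := apply_apply_zero_eq_of_toRealLinearIsometryEquiv_apply_eq
    (toRealLinearIsometryEquiv_apply_eq_of_addRight_mem hG hf hmem)
    (toRealLinearIsometryEquiv_apply_eq_of_addRight_mem hG hg hmem)
  rw [← commutatorElement_eq_one_iff_mul_comm, hcomm, hfix, sub_self]
  ext x
  simp

/-- Let `E` be `k`-dimensional real Euclidean space (`k ≥ 1`) and `G` a nilpotent subgroup of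
the group of bijective isometries of `E` (under composition).  Then `f, g ∈ G` commute if and
only if their linear parts `L_f : x ↦ f x - f 0` and `L_g : x ↦ g x - g 0` commute. -/
theorem isometry_commute_iff_linear_parts_commute (k : ℕ) (hk : 0 < k)
    (G : Subgroup (EuclideanSpace ℝ (Fin k) ≃ᵢ EuclideanSpace ℝ (Fin k)))
    (hG : Group.IsNilpotent G)
    (f g : EuclideanSpace ℝ (Fin k) ≃ᵢ EuclideanSpace ℝ (Fin k)) (hf : f ∈ G) (hg : g ∈ G) :
    f * g = g * f ↔
      (fun x => f x - f 0) ∘ (fun x => g x - g 0) =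
        (fun x => g x - g 0) ∘ (fun x => f x - f 0) :=
  isometry_commute_iff_linear_parts_commute_general k G hG f g hf hg
end

section
/- Let Γ be a finitely generated nilpotent group acting by isometries on a metric space X, let x ∈ X, and suppose there exists R₀ > 0 such that: (H1) every γ ∈ Γ with d(γ·x, x) ≥ R₀ satisfies d(γ²·x, x) ≥ 1.9 · d(γ·x, x); and (H2) for every element γ ∈ Γ of infinite order and every R > 0 there exists N such that d(γⁿ·x, x) ≥ R for all n ≥ N. Then for every integer k ≥ 1, if C_{k+1}(Γ) is finite, then C_k(Γ) is also finite. -/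
/-!
Modulo `C_{k+1}`, the group `C_k` is central and generated by commutators `⁅p, q⁆`, and
`⁅p ^ n, q ^ n⁆ ≡ ⁅p, q⁆ ^ (n * n)`. Hence for `γ ∈ C_k` the element `γ ^ (n * n)` agrees, up to the
finite group `C_{k+1}`, with an element moving `x` by `O(n)`. If `γ` had infinite order, (H2) and
repeated use of (H1) would give `d(γ ^ (m * 2 ^ j) • x, x) ≥ 1.9 ^ j * R₀`, so along `n = N * 2 ^ j`
the displacement of `γ ^ (n * n)` would grow like `3.61 ^ j`, faster than `n`. So `C_k` is torsion;
as `C_k / C_{k+1}` is an abelian group generated by the images of finitely many iterated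
commutators of generators of `Γ`, it is finite, and so is `C_k`.
-/
open Subgroup QuotientGroup
open scoped commutatorElement

section Commutator

variable {G : Type*} [Group G]

theorem conj_pow_eq_commutatorElement_pow_mul {a b : G} (ha : Commute ⁅a, b⁆ a) (n : ℕ) :
    a ^ n * b * (a ^ n)⁻¹ = ⁅a, b⁆ ^ n * b := by
  induction n with
  | zero => simp
  | succ n ih =>
    calc a ^ (n + 1) * b * (a ^ (n + 1))⁻¹ = a * (a ^ n * b * (a ^ n)⁻¹) * a⁻¹ := by group
      _ = ⁅a, b⁆ ^ n * (a * b * a⁻¹) := by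
          rw [ih, ← mul_assoc, ← (ha.pow_left n).eq]; group
      _ = ⁅a, b⁆ ^ (n + 1) * b := by rw [pow_succ, mul_assoc, commutatorElement_def]; group

theorem commutatorElement_pow_pow {a b : G} (ha : Commute ⁅a, b⁆ a) (hb : Commute ⁅a, b⁆ b)
    (n : ℕ) : ⁅a ^ n, b ^ n⁆ = ⁅a, b⁆ ^ (n * n) := by
  rw [commutatorElement_def, ← conj_pow, conj_pow_eq_commutatorElement_pow_mul ha,
    (hb.pow_left n).mul_pow, ← pow_mul, mul_inv_cancel_right]

namespace Subgroup

theorem le_upperCentralSeriesStep_iff {H N : Subgroup G} [N.Normal] :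
    H ≤ N.upperCentralSeriesStep ↔ ⁅H, ⊤⁆ ≤ N := by
  rw [commutator_le]
  exact ⟨fun h g hg y _ => h hg y, fun h g hg y => h g hg y (mem_top y)⟩

theorem closure_le_upperCentralSeriesStep {N : Subgroup G} [N.Normal] {S T : Set G}
    (hS : closure S = ⊤) (hTS : ∀ t ∈ T, ∀ s ∈ S, ⁅t, s⁆ ∈ N) :
    closure T ≤ N.upperCentralSeriesStep := by
  rw [closure_le, Subgroup.upperCentralSeriesStep_eq_comap_center]
  intro t ht
  have : (⊤ : Subgroup (G ⧸ N)) ≤ centralizer {mk' N t} := by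
    rw [← map_top_of_surjective _ (mk'_surjective N), ← hS, MonoidHom.map_closure, closure_le]
    rintro _ ⟨s, hs, rfl⟩
    rw [SetLike.mem_coe, mem_centralizer_singleton_iff, ← commutatorElement_eq_one_iff_mul_comm,
      ← map_commutatorElement, ← MonoidHom.mem_ker, ker_mk', ← commutatorElement_inv]
    exact inv_mem (hTS t ht s hs)
  exact mem_center_iff.2 fun q => mem_centralizer_singleton_iff.1 (this (mem_top q))

end Subgroup

end Commutator

section LowerCentralSeries

variable {G : Type*} [Group G]

theorem Group.FG.exists_finite_closure_sup_lowerCentralSeries_succ_eq (hG : Group.FG G)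
    (n : ℕ) : ∃ T : Set G, T.Finite ∧ T ⊆ (⊤ : Subgroup G).lowerCentralSeries n ∧
      closure T ⊔ (⊤ : Subgroup G).lowerCentralSeries (n + 1) =
        (⊤ : Subgroup G).lowerCentralSeries n := by
  obtain ⟨S, hS, hSfin⟩ := Group.fg_iff.mp hG
  set L := (⊤ : Subgroup G).lowerCentralSeries
  induction n with
  | zero => exact ⟨S, hSfin, by simp [L], by simp [L, hS]⟩
  | succ n ih =>
    obtain ⟨T, hTfin, hTL, hT⟩ := ih
    have hT'L : Set.image2 (⁅·, ·⁆) T S ⊆ L (n + 1) :=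
      Set.image2_subset_iff.2 fun t ht s _ => commutator_mem_commutator (hTL ht) (mem_top s)
    set K := closure (Set.image2 (⁅·, ·⁆) T S) ⊔ L (n + 2)
    have hKL : K ≤ L (n + 1) :=
      sup_le ((closure_le _).2 hT'L) (Subgroup.lowerCentralSeries_antitone _ n.succ.le_succ)
    have : K.Normal :=
      commutator_top_right_le_iff.mp ((commutator_mono hKL le_rfl).trans le_sup_right)
    refine ⟨_, hTfin.image2 _ hSfin, hT'L, le_antisymm hKL ?_⟩
    change ⁅L n, ⊤⁆ ≤ K
    rw [← le_upperCentralSeriesStep_iff, ← hT]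
    refine sup_le (closure_le_upperCentralSeriesStep hS fun t ht s hs =>
      mem_sup_left (subset_closure (Set.mem_image2_of_mem ht hs))) ?_
    exact le_upperCentralSeriesStep_iff.2 le_sup_right

open scoped IsMulCommutative in
theorem finite_lowerCentralSeries_of_isOfFinOrder (hG : Group.FG G) (n : ℕ)
    [Finite ((⊤ : Subgroup G).lowerCentralSeries (n + 1))]
    (htor : ∀ g ∈ (⊤ : Subgroup G).lowerCentralSeries n, IsOfFinOrder g) :
    Finite ((⊤ : Subgroup G).lowerCentralSeries n) := by
  obtain ⟨T, hTfin, -, hT⟩ := hG.exists_finite_closure_sup_lowerCentralSeries_succ_eq n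
  set L := (⊤ : Subgroup G).lowerCentralSeries
  set π := mk' (L (n + 1))
  have hcentral : (L n).map π ≤ center (G ⧸ L (n + 1)) := by
    rw [map_le_iff_le_comap, ← Subgroup.upperCentralSeriesStep_eq_comap_center,
      le_upperCentralSeriesStep_iff]
    exact le_rfl
  have : IsMulCommutative ((L n).map π) :=
    le_centralizer_iff_isMulCommutative.1 (hcentral.trans (center_le_centralizer _))
  have : Group.FG ((L n).map π) := by
    rw [Group.fg_iff_subgroup_fg, ← hT, Subgroup.map_sup, MonoidHom.map_closure,
      (Subgroup.map_eq_bot_iff _).2 (ker_mk' _).ge, sup_bot_eq]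
    exact (fg_iff _).2 ⟨_, rfl, hTfin.image _⟩
  have : Finite ((L n).map π) := CommGroup.finite_of_fg_isMulTorsion _ <| by
    rintro ⟨_, g, hg, rfl⟩
    exact Submonoid.isOfFinOrder_coe.1 (π.isOfFinOrder (htor g hg))
  rw [(π.domRestrict (L n)).finite_iff_finite_ker_range, MonoidHom.ker_domRestrict,
    MonoidHom.domRestrict_range, ker_mk']
  have hle : L (n + 1) ≤ L n := Subgroup.lowerCentralSeries_antitone _ n.le_succ
  exact ⟨.of_equiv _ (subgroupOfEquivOfLe hle).symm.toEquiv, this⟩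

end LowerCentralSeries

section Displacement

variable {Γ X : Type*} [Group Γ] [PseudoMetricSpace X] [MulAction Γ X] [IsIsometricSMul Γ X]
  (x : X)

theorem dist_mul_smul_le (g h : Γ) :
    dist ((g * h) • x) x ≤ dist (g • x) x + dist (h • x) x :=
  calc dist ((g * h) • x) x ≤ dist (g • h • x) (g • x) + dist (g • x) x := by
        rw [mul_smul]; exact dist_triangle _ _ _
    _ = dist (g • x) x + dist (h • x) x := by rw [dist_smul, add_comm]

theorem dist_inv_smul (g : Γ) : dist (g⁻¹ • x) x = dist (g • x) x := by
  rw [← dist_smul g, smul_inv_smul, dist_comm]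

theorem dist_pow_smul_le (g : Γ) (n : ℕ) : dist ((g ^ n) • x) x ≤ n * dist (g • x) x := by
  induction n with
  | zero => simp
  | succ n ih =>
    calc dist ((g ^ (n + 1)) • x) x ≤ dist ((g ^ n) • x) x + dist (g • x) x := by
          rw [pow_succ]; exact dist_mul_smul_le x _ _
      _ ≤ (n + 1 : ℕ) * dist (g • x) x := by push_cast; linarith

theorem dist_commutatorElement_smul_le (g h : Γ) :
    dist (⁅g, h⁆ • x) x ≤ 2 * (dist (g • x) x + dist (h • x) x) := by
  have := dist_mul_smul_le x (g * h * g⁻¹) h⁻¹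
  have := dist_mul_smul_le x (g * h) g⁻¹
  have := dist_mul_smul_le x g h
  rw [dist_inv_smul] at *
  rw [commutatorElement_def]
  linarith

theorem exists_mk_eq_sq_pow_dist_smul_le {N H K : Subgroup Γ} [N.Normal]
    (hHK : ⁅H, K⁆ ≤ N.upperCentralSeriesStep) {γ : Γ} (hγ : γ ∈ ⁅H, K⁆) :
    ∃ C : ℝ, ∀ n : ℕ, ∃ w : Γ, mk' N w = mk' N (γ ^ (n * n)) ∧ dist (w • x) x ≤ C * n := by
  have hcentral : ∀ g ∈ ⁅H, K⁆, ∀ q : Γ ⧸ N, Commute (mk' N g) q := fun g hg q => by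
    have := hHK hg
    rw [Subgroup.upperCentralSeriesStep_eq_comap_center] at this
    exact (mem_center_iff.1 this q).symm
  rw [Subgroup.commutator_def] at hγ
  induction hγ using closure_induction with
  | mem g hg =>
    obtain ⟨p, hp, q, hq, rfl⟩ := hg
    refine ⟨2 * (dist (p • x) x + dist (q • x) x), fun n => ⟨⁅p ^ n, q ^ n⁆, ?_, ?_⟩⟩
    · have hpq := hcentral _ (commutator_mem_commutator hp hq)
      rw [map_commutatorElement] at hpq
      simp only [map_commutatorElement, map_pow, commutatorElement_pow_pow (hpq _) (hpq _)]
    · calc dist (⁅p ^ n, q ^ n⁆ • x) x ≤ 2 * (dist ((p ^ n) • x) x + dist ((q ^ n) • x) x) :=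
            dist_commutatorElement_smul_le x _ _
        _ ≤ 2 * (n * dist (p • x) x + n * dist (q • x) x) := by
            gcongr <;> exact dist_pow_smul_le x _ n
        _ = 2 * (dist (p • x) x + dist (q • x) x) * n := by ring
  | one => exact ⟨0, fun n => ⟨1, by simp, by simp⟩⟩
  | mul a b ha hb iha ihb =>
    obtain ⟨C₁, hC₁⟩ := iha
    obtain ⟨C₂, hC₂⟩ := ihb
    refine ⟨C₁ + C₂, fun n => ?_⟩
    obtain ⟨w₁, hw₁, hd₁⟩ := hC₁ n
    obtain ⟨w₂, hw₂, hd₂⟩ := hC₂ n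
    refine ⟨w₁ * w₂, ?_, ?_⟩
    · rw [map_mul, hw₁, hw₂, map_pow, map_pow, map_pow, map_mul,
        (hcentral a ha (mk' N b)).mul_pow]
    · calc dist ((w₁ * w₂) • x) x ≤ dist (w₁ • x) x + dist (w₂ • x) x := dist_mul_smul_le x _ _
        _ ≤ (C₁ + C₂) * n := by linarith
  | inv a ha iha =>
    obtain ⟨C, hC⟩ := iha
    refine ⟨C, fun n => ?_⟩
    obtain ⟨w, hw, hd⟩ := hC n
    exact ⟨w⁻¹, by rw [map_inv, hw, inv_pow, map_inv], by rwa [dist_inv_smul]⟩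

theorem exists_dist_sq_pow_smul_le {N H K : Subgroup Γ} [N.Normal] [Finite N]
    (hHK : ⁅H, K⁆ ≤ N.upperCentralSeriesStep) {γ : Γ} (hγ : γ ∈ ⁅H, K⁆) :
    ∃ C B : ℝ, ∀ n : ℕ, dist ((γ ^ (n * n)) • x) x ≤ C * n + B := by
  obtain ⟨C, hC⟩ := exists_mk_eq_sq_pow_dist_smul_le x hHK hγ
  obtain ⟨B, hB⟩ := ((N : Set Γ).toFinite.image fun f => dist (f • x) x).bddAbove
  refine ⟨C, B, fun n => ?_⟩
  obtain ⟨w, hw, hd⟩ := hC n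
  have hf : w⁻¹ * γ ^ (n * n) ∈ N := by
    rw [← ker_mk' N, MonoidHom.mem_ker, map_mul, map_inv, hw, inv_mul_cancel]
  calc dist ((γ ^ (n * n)) • x) x = dist ((w * (w⁻¹ * γ ^ (n * n))) • x) x := by
        rw [mul_inv_cancel_left]
    _ ≤ dist (w • x) x + dist ((w⁻¹ * γ ^ (n * n)) • x) x := dist_mul_smul_le x _ _
    _ ≤ C * n + B := add_le_add hd (hB ⟨_, hf, rfl⟩)

end Displacement

theorem not_exists_sq_le_linear_of_doubling {f : ℕ → ℝ} {c R₀ : ℝ} (hc : √2 < c) (hR₀ : 0 < R₀)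
    (hdouble : ∀ m, R₀ ≤ f m → c * f m ≤ f (2 * m)) {N : ℕ} (hN : ∀ m ≥ N, R₀ ≤ f m) :
    ¬ ∃ C B : ℝ, ∀ n : ℕ, f (n * n) ≤ C * n + B := by
  rintro ⟨C, B, hlin⟩
  -- along `n = N * 2 ^ j`, `f (n * n)` grows like `(c ^ 2) ^ j` but only like `2 ^ j` by `hlin`
  have hc0 : 0 ≤ c := (Real.sqrt_nonneg 2).trans hc.le
  have hlower : ∀ j, c ^ j * R₀ ≤ f (N * N * 2 ^ j) := by
    intro j
    induction j with
    | zero => simpa using hN _ (Nat.le_mul_self N)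
    | succ j ih =>
      calc c ^ (j + 1) * R₀ = c * (c ^ j * R₀) := by ring
        _ ≤ c * f (N * N * 2 ^ j) := by gcongr
        _ ≤ f (2 * (N * N * 2 ^ j)) :=
            hdouble _ (hN _ ((Nat.le_mul_self N).trans (Nat.le_mul_of_pos_right _ (by positivity))))
        _ = f (N * N * 2 ^ (j + 1)) := by ring_nf
  have ha : 1 < c ^ 2 / 2 := by
    have := pow_lt_pow_left₀ hc (Real.sqrt_nonneg 2) two_ne_zero
    rw [Real.sq_sqrt zero_le_two] at this
    linarith
  have hbound : ∀ j, (c ^ 2 / 2) ^ j * R₀ ≤ |C| * N + |B| := by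
    intro j
    have h2j : (1 : ℝ) ≤ 2 ^ j := one_le_pow₀ one_le_two
    have hup := hlin (N * 2 ^ j)
    rw [show N * 2 ^ j * (N * 2 ^ j) = N * N * 2 ^ (2 * j) by ring] at hup
    push_cast at hup
    have hC : C * (N * 2 ^ j) ≤ |C| * N * 2 ^ j := by
      rw [mul_assoc]; exact mul_le_mul_of_nonneg_right (le_abs_self C) (by positivity)
    have hB : B ≤ |B| * 2 ^ j := (le_abs_self B).trans (le_mul_of_one_le_right (abs_nonneg B) h2j)
    have hquad : (c ^ 2 / 2) ^ j * R₀ * 2 ^ j ≤ (|C| * N + |B|) * 2 ^ j := by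
      calc (c ^ 2 / 2) ^ j * R₀ * 2 ^ j = c ^ (2 * j) * R₀ := by
            rw [pow_mul, div_pow, div_mul_eq_mul_div, mul_div_assoc]; field_simp
        _ ≤ (|C| * N + |B|) * 2 ^ j := by linarith [hlower (2 * j)]
    exact le_of_mul_le_mul_right hquad (by positivity)
  obtain ⟨j, hj⟩ := pow_unbounded_of_one_lt ((|C| * N + |B|) / R₀) ha
  rw [div_lt_iff₀ hR₀] at hj
  linarith [hbound j]

theorem lcs_finite_of_succ_finite_general {Γ X : Type*} [Group Γ] [MetricSpace X] [MulAction Γ X]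
    (hfg : Group.FG Γ)
    (hiso : ∀ γ : Γ, Isometry (fun y : X => γ • y)) (x : X) (R₀ : ℝ) (hR₀ : 0 < R₀)
    (H1 : ∀ γ : Γ, R₀ ≤ dist (γ • x) x → 1.9 * dist (γ • x) x ≤ dist ((γ ^ 2) • x) x)
    (H2 : ∀ γ : Γ, ¬ IsOfFinOrder γ → ∀ R : ℝ, 0 < R →
      ∃ N : ℕ, ∀ n ≥ N, R ≤ dist ((γ ^ n) • x) x) :
    ∀ k : ℕ, 1 ≤ k → Finite ((⊤ : Subgroup Γ).lowerCentralSeries (k + 1)) →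
      Finite ((⊤ : Subgroup Γ).lowerCentralSeries k) := by
  rintro k hk hfin
  obtain ⟨j, rfl⟩ : ∃ j, k = j + 1 := ⟨k - 1, by omega⟩
  have : IsIsometricSMul Γ X := ⟨hiso⟩
  refine finite_lowerCentralSeries_of_isOfFinOrder hfg _ fun γ hγ => ?_
  by_contra hγ_inf
  obtain ⟨N, hN⟩ := H2 γ hγ_inf R₀ hR₀
  refine not_exists_sq_le_linear_of_doubling (f := fun n => dist ((γ ^ n) • x) x)
    (c := 1.9) ?_ hR₀ (fun m hm => ?_) hN ?_
  · rw [Real.sqrt_lt' (by norm_num)]; norm_num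
  · simpa only [pow_mul'] using H1 (γ ^ m) hm
  · exact exists_dist_sq_pow_smul_le x (N := (⊤ : Subgroup Γ).lowerCentralSeries (j + 2))
      (le_upperCentralSeriesStep_iff.2 le_rfl) hγ

/-- Let `Γ` be a finitely generated nilpotent group acting by isometries on a metric space
`X`, `x ∈ X`, with `R₀ > 0` satisfying (H1) and (H2) as below.  Then for every `k ≥ 1`, if
`C_{k+1}(Γ)` is finite then so is `C_k(Γ)`. -/
theorem lcs_finite_of_succ_finite {Γ X : Type*} [Group Γ] [MetricSpace X] [MulAction Γ X]
    (hfg : Group.FG Γ) (hnil : Group.IsNilpotent Γ)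
    (hiso : ∀ γ : Γ, Isometry (fun y : X => γ • y)) (x : X) (R₀ : ℝ) (hR₀ : 0 < R₀)
    (H1 : ∀ γ : Γ, R₀ ≤ dist (γ • x) x → 1.9 * dist (γ • x) x ≤ dist ((γ ^ 2) • x) x)
    (H2 : ∀ γ : Γ, ¬ IsOfFinOrder γ → ∀ R : ℝ, 0 < R →
      ∃ N : ℕ, ∀ n ≥ N, R ≤ dist ((γ ^ n) • x) x) :
    ∀ k : ℕ, 1 ≤ k → Finite ((⊤ : Subgroup Γ).lowerCentralSeries (k + 1)) →
      Finite ((⊤ : Subgroup Γ).lowerCentralSeries k) :=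
  lcs_finite_of_succ_finite_general hfg hiso x R₀ hR₀ H1 H2
end

section
/- Let G be a compact Lie group that is nilpotent as an abstract group. Then the identity component G₀ of G is central in G: every element of the connected component of the identity commutes with every element of G. -/
/-!
A Lie group has no small subgroups: in the chart at `1` multiplication is `(a, b) ↦ a + b + o(b)`,
so the coordinate of `z ^ n` grows linearly in `n` unless `z = 1`.
If every commutator `⁅x, h⁆` with `x` in a connected set `A ∋ 1` is central, then
`⁅x ^ n, w⁆ = ⁅x, w⁆ ^ n`, and the tube lemma over the compact closure of the powers of `x`
shows that `x` commutes with a neighbourhood of `1`, hence with `G₀`. With `m = [G : G₀]` this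
gives `⁅x, h⁆ ^ m = ⁅x, h ^ m⁆ = 1`, and the connected set `⁅A, h⁆` of such torsion elements
through `1` is trivial, since `1` is isolated among the elements of order dividing `m`.
The sets of iterated commutators `G₀, ⁅G₀, G⁆, ⁅⁅G₀, G⁆, G⁆, …` are connected and eventually
trivial by nilpotency; descending along them gives `⁅G₀, G⁆ = 1`.
-/

open Set Filter Topology Manifold
open scoped commutatorElement

def NoSmallSubgroups (G : Type*) [Group G] [TopologicalSpace G] : Prop :=
  ∃ U ∈ 𝓝 (1 : G), ∀ H : Subgroup G, (H : Set G) ⊆ U → H = ⊥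

section NoSmallSubgroups

variable {G : Type*} [Group G] [TopologicalSpace G]

theorem noSmallSubgroups_of_norm_mul_sub_le {E : Type*} [NormedAddCommGroup E]
    [NormedSpace ℝ E] {φ : G → E} (hφ : ContinuousAt φ 1) (hφ1 : φ 1 = 0)
    (hinj : ∀ᶠ g in 𝓝 1, φ g = 0 → g = 1)
    (hmul : ∀ᶠ p : G × G in 𝓝 1, ‖φ (p.1 * p.2) - φ p.1 - φ p.2‖ ≤ ‖φ p.2‖ / 2) :
    NoSmallSubgroups G := by
  rw [Prod.one_eq_mk, nhds_prod_eq] at hmul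
  obtain ⟨W, hW, hWmul⟩ := mem_prod_self_iff.mp hmul
  have hsmall : ∀ᶠ g in 𝓝 (1 : G), ‖φ g‖ < 1 := by
    simpa [hφ1] using hφ.eventually (Metric.ball_mem_nhds _ one_pos)
  refine ⟨_, inter_mem hW (hinj.and hsmall), fun H hH => eq_bot_iff.mpr fun z hz => ?_⟩
  have hlin : ∀ n : ℕ, ‖φ (z ^ n) - n • φ z‖ ≤ n * (‖φ z‖ / 2) := by
    intro n
    induction n with
    | zero => simp [hφ1]
    | succ n ih =>
      have h : ‖φ (z ^ (n + 1)) - φ (z ^ n) - φ z‖ ≤ ‖φ z‖ / 2 := by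
        simpa [← pow_succ] using hWmul (mk_mem_prod (hH (H.pow_mem hz n)).1 (hH hz).1)
      calc ‖φ (z ^ (n + 1)) - (n + 1) • φ z‖
          = ‖(φ (z ^ (n + 1)) - φ (z ^ n) - φ z) + (φ (z ^ n) - n • φ z)‖ := by
            rw [succ_nsmul]; abel_nf
        _ ≤ ‖φ z‖ / 2 + n * (‖φ z‖ / 2) := (norm_add_le _ _).trans (add_le_add h ih)
        _ = (n + 1 : ℕ) * (‖φ z‖ / 2) := by push_cast; ring
  have hzero : ‖φ z‖ = 0 := by
    by_contra hne
    have hpos : 0 < ‖φ z‖ := (norm_nonneg _).lt_of_ne' hne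
    obtain ⟨n, hn⟩ := exists_nat_gt (2 / ‖φ z‖)
    rw [div_lt_iff₀ hpos] at hn
    have hbound := (hH (H.pow_mem hz n)).2.2
    have htri := norm_sub_norm_le (n • φ z) (φ (z ^ n))
    rw [norm_sub_rev, RCLike.norm_nsmul ℝ, nsmul_eq_mul] at htri
    nlinarith [hlin n]
  exact Subgroup.mem_bot.mpr ((hH hz).2.1 (norm_eq_zero.mp hzero))

variable [IsTopologicalGroup G]

theorem NoSmallSubgroups.exists_pow_mem (hG : NoSmallSubgroups G) :
    ∃ U ∈ 𝓝 (1 : G), ∀ z : G, (∀ n : ℕ, z ^ n ∈ U) → z = 1 := by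
  obtain ⟨U, hU, hUsub⟩ := hG
  refine ⟨U ∩ U⁻¹, inter_mem hU (inv_mem_nhds_one G hU), fun z hz => ?_⟩
  rw [← Subgroup.zpowers_eq_bot]
  refine hUsub _ ?_
  rintro _ ⟨k, rfl⟩
  rcases Int.eq_nat_or_neg k with ⟨n, rfl | rfl⟩
  · simpa using (hz n).1
  · simpa using (hz n).2

theorem NoSmallSubgroups.eventually_eq_one_of_pow_eq_one (hG : NoSmallSubgroups G) {m : ℕ}
    (hm : 0 < m) : ∀ᶠ z in 𝓝 (1 : G), z ^ m = 1 → z = 1 := by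
  obtain ⟨U, hU, hUpow⟩ := hG.exists_pow_mem
  have hpowU : ∀ᶠ z in 𝓝 (1 : G), ∀ k : Fin m, z ^ (k : ℕ) ∈ U :=
    eventually_all.mpr fun k => (continuous_pow (k : ℕ)).continuousAt.eventually_mem (by simpa)
  filter_upwards [hpowU] with z hz hzm
  exact hUpow z fun n => pow_eq_pow_mod n hzm ▸ hz ⟨n % m, Nat.mod_lt n hm⟩

theorem NoSmallSubgroups.eq_one_of_isPreconnected [T1Space G] (hG : NoSmallSubgroups G)
    {S : Set G} (hS : IsPreconnected S) (h1 : 1 ∈ S) {m : ℕ} (hm : 0 < m)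
    (hSm : ∀ z ∈ S, z ^ m = 1) : ∀ z ∈ S, z = 1 := by
  obtain ⟨V, hVtors, hVo, h1V⟩ := eventually_nhds_iff.mp (hG.eventually_eq_one_of_pow_eq_one hm)
  by_contra! ⟨z, hz, hz1⟩
  obtain ⟨y, hyS, hyV, hy1⟩ := hS V {1}ᶜ hVo isOpen_compl_singleton
    (fun y _ => (em (y = 1)).imp (fun hy : y = 1 => hy ▸ h1V) id) ⟨1, h1, h1V⟩ ⟨z, hz, hz1⟩
  exact hy1 (hVtors y hyV (hSm y hyS))

end NoSmallSubgroups

/-- The strict derivative at `(1, 1)` of multiplication read in the chart at `1` is addition. -/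
theorem LieGroup.eventually_norm_extChartAt_mul_sub_le {E : Type*} [NormedAddCommGroup E]
    [NormedSpace ℝ E] {G : Type*} [TopologicalSpace G] [ChartedSpace E G] [Group G]
    {n : WithTop ℕ∞} [LieGroup 𝓘(ℝ, E) n G] (hn : n ≠ 0) {ε : ℝ} (hε : 0 < ε) :
    ∀ᶠ p : G × G in 𝓝 1,
      ‖extChartAt 𝓘(ℝ, E) 1 (p.1 * p.2) - extChartAt 𝓘(ℝ, E) 1 p.1
          - (extChartAt 𝓘(ℝ, E) 1 p.2 - extChartAt 𝓘(ℝ, E) (1 : G) 1)‖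
        ≤ ε * ‖extChartAt 𝓘(ℝ, E) 1 p.2 - extChartAt 𝓘(ℝ, E) (1 : G) 1‖ := by
  set e := extChartAt 𝓘(ℝ, E) (1 : G)
  set o := e 1
  set μ : E × E → E := fun p => e (e.symm p.1 * e.symm p.2)
  have hμ : ContDiffAt ℝ n μ (o, o) := by
    have h := (contMDiffAt_iff.mp
      ((contMDiff_mul 𝓘(ℝ, E) n (G := G)).contMDiffAt (x := (1, 1)))).2
    rw [extChartAt_prod] at h
    simpa [μ, o, e, Function.comp_def, contDiffWithinAt_univ] using h
  set L := fderiv ℝ μ (o, o)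
  have hsymm : e.symm o = 1 := extChartAt_to_inv 1
  have hL : ∀ v, L (0, v) = v := by
    have hd : HasFDerivAt (fun b => μ (o, b)) (L.comp (ContinuousLinearMap.inr ℝ E E)) o :=
      (hμ.differentiableAt hn).hasFDerivAt.comp o (hasFDerivAt_prodMk_right o o)
    have hid : (fun b => μ (o, b)) =ᶠ[𝓝 o] id := by
      filter_upwards [extChartAt_target_mem_nhds (I := 𝓘(ℝ, E)) (1 : G)] with b hb
      simp [μ, hsymm, e.right_inv hb]
    have := hd.unique (hid.hasFDerivAt_iff.mpr (hasFDerivAt_id o))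
    exact fun v => congr($this v)
  have hstrict := (hμ.hasStrictFDerivAt hn).isLittleO.def hε
  have hpair : Tendsto (fun p : G × G => ((e p.1, e p.2), (e p.1, o))) (𝓝 1)
      (𝓝 ((o, o), (o, o))) := by
    have hc : ContinuousAt e 1 := continuousAt_extChartAt 1
    have h1 : ContinuousAt (fun p : G × G => e p.1) 1 :=
      hc.comp (f := Prod.fst) (x := (1 : G × G)) continuousAt_fst
    have h2 : ContinuousAt (fun p : G × G => e p.2) 1 :=
      hc.comp (f := Prod.snd) (x := (1 : G × G)) continuousAt_snd
    exact ((h1.prodMk h2).prodMk (h1.prodMk continuousAt_const)).tendsto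
  have hsource : ∀ᶠ p : G × G in 𝓝 1, p.1 ∈ e.source ∧ p.2 ∈ e.source :=
    (continuousAt_fst.eventually_mem (extChartAt_source_mem_nhds 1)).and
      (continuousAt_snd.eventually_mem (extChartAt_source_mem_nhds 1))
  filter_upwards [hpair.eventually hstrict, hsource] with p hp ⟨h1, h2⟩
  have hdiff : (e p.1, e p.2) - (e p.1, o) = (0, e p.2 - o) := by simp
  rw [hdiff, hL] at hp
  simpa [μ, e.left_inv h1, e.left_inv h2, hsymm] using hp

theorem LieGroup.noSmallSubgroups {E : Type*} [NormedAddCommGroup E] [NormedSpace ℝ E]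
    {G : Type*} [TopologicalSpace G] [ChartedSpace E G] [Group G] {n : WithTop ℕ∞}
    [LieGroup 𝓘(ℝ, E) n G] (hn : n ≠ 0) : NoSmallSubgroups G := by
  set e := extChartAt 𝓘(ℝ, E) (1 : G)
  refine noSmallSubgroups_of_norm_mul_sub_le (φ := fun g => e g - e 1)
    ((continuousAt_extChartAt 1).sub continuousAt_const) (sub_self _) ?_ ?_
  · filter_upwards [extChartAt_source_mem_nhds (I := 𝓘(ℝ, E)) (1 : G)] with g hg hg1
    exact e.injOn hg (mem_extChartAt_source 1) (sub_eq_zero.mp hg1)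
  · filter_upwards [LieGroup.eventually_norm_extChartAt_mul_sub_le (E := E) hn (ε := 1 / 2)
      (by norm_num)] with p hp
    calc _ = _ := by congr 1; abel
      _ ≤ _ := hp.trans_eq (by ring)

section Commutator

variable {G : Type*} [Group G]

theorem commutatorElement_pow_left {x w : G} (hc : Commute ⁅x, w⁆ x) (n : ℕ) :
    ⁅x ^ n, w⁆ = ⁅x, w⁆ ^ n := by
  induction n with
  | zero => simp
  | succ n ih =>
    rw [pow_succ', commutatorElement_mul_left_eq_conj_mul, ih, ← (hc.pow_left n).eq,
      mul_inv_cancel_right, pow_succ]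

theorem commutatorElement_pow_right {x w : G} (hc : Commute ⁅x, w⁆ w) (n : ℕ) :
    ⁅x, w ^ n⁆ = ⁅x, w⁆ ^ n := by
  induction n with
  | zero => simp
  | succ n ih =>
    rw [pow_succ, commutatorElement_mul_right_eq_mul_conj, ih, mul_assoc _ (w ^ n),
      ← (hc.pow_right n).eq, ← mul_assoc, mul_inv_cancel_right, pow_succ]

end Commutator

instance Subgroup.connectedComponentOfOne_normal (G : Type*) [TopologicalSpace G] [Group G]
    [IsTopologicalGroup G] : (Subgroup.connectedComponentOfOne G).Normal where
  conj_mem x hx g := by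
    have h := (IsTopologicalGroup.continuous_conj g).image_connectedComponent_subset 1
    simp only [mul_one, mul_inv_cancel] at h
    exact h ⟨x, hx, rfl⟩

namespace NoSmallSubgroups

variable {G : Type*} [Group G] [TopologicalSpace G] [IsTopologicalGroup G] [CompactSpace G]

/-- The powers of `x` stay in a compact set, so by the tube lemma `⁅x ^ n, w⁆ = ⁅x, w⁆ ^ n`
is small uniformly in `n` for `w` near `1`. -/
theorem connectedComponent_subset_centralizer (hG : NoSmallSubgroups G) {x : G}
    (hx : ∀ w : G, Commute ⁅x, w⁆ x) :
    connectedComponent (1 : G) ⊆ Subgroup.centralizer {x} := by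
  obtain ⟨U, hU, hUpow⟩ := hG.exists_pow_mem
  have hK : IsCompact (closure (range (x ^ · : ℕ → G))) := isClosed_closure.isCompact
  have hcont : Continuous fun p : G × G => ⁅p.2, p.1⁆ := by
    simp only [commutatorElement_def]; fun_prop
  have hsmall : ∀ᶠ w in 𝓝 (1 : G), ∀ y ∈ closure (range (x ^ · : ℕ → G)), ⁅y, w⁆ ∈ U :=
    hK.eventually_forall_of_forall_eventually fun y _ =>
      hcont.continuousAt.eventually_mem (by simpa using hU)
  have hnhds : (Subgroup.centralizer {x} : Set G) ∈ 𝓝 1 := by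
    filter_upwards [hsmall] with w hw
    rw [SetLike.mem_coe, Subgroup.mem_centralizer_iff_commutator_eq_one]
    rintro _ rfl
    exact hUpow _ fun n => commutatorElement_pow_left (hx w) n ▸
      hw _ (subset_closure ⟨n, rfl⟩)
  have hopen := Subgroup.isOpen_of_mem_nhds _ hnhds
  exact IsClopen.connectedComponent_subset ⟨Subgroup.isClosed_of_isOpen _ hopen, hopen⟩
    (Subgroup.one_mem _)

theorem commutatorElement_pow_index_eq_one (hG : NoSmallSubgroups G) {x : G}
    (hx : ∀ h g : G, Commute ⁅x, h⁆ g) (h : G) :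
    ⁅x, h⁆ ^ (Subgroup.connectedComponentOfOne G).index = 1 := by
  have hpow := Subgroup.pow_index_mem (Subgroup.connectedComponentOfOne G) h
  rw [← commutatorElement_pow_right (hx h h)]
  exact Subgroup.mem_centralizer_iff_commutator_eq_one.mp
    (hG.connectedComponent_subset_centralizer (fun w => hx w x) hpow) x rfl

theorem commutatorElement_eq_one_of_isPreconnected [T1Space G] [LocallyConnectedSpace G]
    (hG : NoSmallSubgroups G) {A : Set G} (hA : IsPreconnected A) (h1 : 1 ∈ A)
    (hcen : ∀ x ∈ A, ∀ h g : G, Commute ⁅x, h⁆ g) {x : G} (hx : x ∈ A) (h : G) : ⁅x, h⁆ = 1 := by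
  have hindex : 0 < (Subgroup.connectedComponentOfOne G).index := by
    have : Finite (G ⧸ Subgroup.connectedComponentOfOne G) :=
      Subgroup.quotient_finite_of_isOpen _ isOpen_connectedComponent
    exact Nat.pos_of_ne_zero Subgroup.index_ne_zero_of_finite
  refine hG.eq_one_of_isPreconnected (S := (⁅·, h⁆) '' A) ?_ ⟨1, h1, by simp⟩ hindex ?_ _
    ⟨x, hx, rfl⟩
  · exact hA.image _ (by simp only [commutatorElement_def]; fun_prop)
  · rintro _ ⟨y, hy, rfl⟩
    exact hG.commutatorElement_pow_index_eq_one (hcen y hy) h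

end NoSmallSubgroups

section IteratedCommutators

variable {G : Type*} [Group G]

def iteratedCommutators (S : Set G) : ℕ → Set G
  | 0 => S
  | n + 1 => ⋃ h : G, (⁅·, h⁆) '' iteratedCommutators S n

variable {S : Set G}

theorem commutatorElement_mem_iteratedCommutators_succ {n : ℕ} {x : G}
    (hx : x ∈ iteratedCommutators S n) (h : G) : ⁅x, h⁆ ∈ iteratedCommutators S (n + 1) :=
  mem_iUnion.mpr ⟨h, x, hx, rfl⟩

theorem one_mem_iteratedCommutators (h1 : 1 ∈ S) : ∀ n, (1 : G) ∈ iteratedCommutators S n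
  | 0 => h1
  | n + 1 => by
    simpa using commutatorElement_mem_iteratedCommutators_succ (one_mem_iteratedCommutators h1 n) 1

theorem iteratedCommutators_subset_lowerCentralSeries (S : Set G) :
    ∀ n, iteratedCommutators S n ⊆ (⊤ : Subgroup G).lowerCentralSeries n
  | 0 => fun _ _ => Subgroup.mem_top _
  | n + 1 => iUnion_subset fun h => image_subset_iff.mpr fun _ hx =>
    Subgroup.commutator_mem_commutator (iteratedCommutators_subset_lowerCentralSeries S n hx)
      (Subgroup.mem_top h)

theorem IsPreconnected.iteratedCommutators [TopologicalSpace G] [IsTopologicalGroup G]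
    (hS : IsPreconnected S) (h1 : 1 ∈ S) : ∀ n, IsPreconnected (iteratedCommutators S n)
  | 0 => hS
  | n + 1 => isPreconnected_iUnion
    ⟨1, mem_iInter.mpr fun h => ⟨1, one_mem_iteratedCommutators h1 n, by simp⟩⟩
    fun h => (hS.iteratedCommutators h1 n).image _
      (by simp only [commutatorElement_def]; fun_prop)

end IteratedCommutators

namespace NoSmallSubgroups

variable {G : Type*} [Group G] [TopologicalSpace G] [IsTopologicalGroup G] [CompactSpace G]
  [T1Space G] [LocallyConnectedSpace G] {S : Set G}

theorem iteratedCommutators_subset_one_of_succ (hG : NoSmallSubgroups G) (hS : IsPreconnected S)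
    (h1 : 1 ∈ S) {n : ℕ} (hn : iteratedCommutators S (n + 2) ⊆ {1}) :
    iteratedCommutators S (n + 1) ⊆ {1} := by
  rintro _ ⟨_, ⟨h, rfl⟩, x, hx, rfl⟩
  refine hG.commutatorElement_eq_one_of_isPreconnected (hS.iteratedCommutators h1 n)
    (one_mem_iteratedCommutators h1 n) (fun y hy k g => ?_) hx h
  exact commutatorElement_eq_one_iff_commute.mp <| hn <|
    commutatorElement_mem_iteratedCommutators_succ
      (commutatorElement_mem_iteratedCommutators_succ hy k) g

theorem iteratedCommutators_one_subset_one (hG : NoSmallSubgroups G) (hS : IsPreconnected S)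
    (h1 : 1 ∈ S) {n : ℕ} (hn : iteratedCommutators S n ⊆ {1}) :
    iteratedCommutators S 1 ⊆ {1} := by
  induction n with
  | zero =>
    rintro _ ⟨_, ⟨h, rfl⟩, x, hx, rfl⟩
    simp [show x = 1 from hn hx]
  | succ n ih =>
    cases n with
    | zero => exact hn
    | succ n => exact ih (hG.iteratedCommutators_subset_one_of_succ hS h1 hn)

end NoSmallSubgroups

theorem identityComponent_central_of_compact_nilpotent_lieGroup_general
    {E : Type*} [NormedAddCommGroup E] [NormedSpace ℝ E]
    {G : Type*} [TopologicalSpace G] [ChartedSpace E G] [Group G]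
    [LieGroup (modelWithCornersSelf ℝ E) (⊤ : ℕ∞) G] [CompactSpace G]
    (hnil : Group.IsNilpotent G) :
    ∀ g ∈ connectedComponent (1 : G), ∀ h : G, g * h = h * g := by
  have : IsTopologicalGroup G := topologicalGroup_of_lieGroup 𝓘(ℝ, E) (⊤ : ℕ∞)
  have : T1Space G := ChartedSpace.t1Space E G
  have : LocallyConnectedSpace G := ChartedSpace.locallyConnectedSpace E G
  have hG : NoSmallSubgroups G := LieGroup.noSmallSubgroups (E := E) (n := (⊤ : ℕ∞)) (by simp)
  obtain ⟨N, hN⟩ := Subgroup.nilpotent_iff_lowerCentralSeries.mp hnil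
  have hlast : iteratedCommutators (connectedComponent (1 : G)) N ⊆ {1} := by
    simpa [hN] using iteratedCommutators_subset_lowerCentralSeries (connectedComponent (1 : G)) N
  have hfirst := hG.iteratedCommutators_one_subset_one isPreconnected_connectedComponent
    mem_connectedComponent hlast
  intro g hg h
  exact commutatorElement_eq_one_iff_mul_comm.mp
    (hfirst (commutatorElement_mem_iteratedCommutators_succ (n := 0) hg h))

/-- The identity component of a compact Lie group (modeled on a finite-dimensional real
vector space) that is nilpotent as an abstract group is central. -/
theorem identityComponent_central_of_compact_nilpotent_lieGroup
    {E : Type*} [NormedAddCommGroup E] [NormedSpace ℝ E] [FiniteDimensional ℝ E]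
    {G : Type*} [TopologicalSpace G] [ChartedSpace E G] [Group G]
    [LieGroup (modelWithCornersSelf ℝ E) (⊤ : ℕ∞) G] [CompactSpace G]
    (hnil : Group.IsNilpotent G) :
    ∀ g ∈ connectedComponent (1 : G), ∀ h : G, g * h = h * g :=
  identityComponent_central_of_compact_nilpotent_lieGroup_general (E := E) hnil
end
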